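/- arXiv:0807.5134 — 5 statements merged into one kernel-verified Lean document; each statement's English description precedes it below -/
import Mathlib

section
/- Let L be a Lie algebra over a commutative ring R and let τ : L → L be an R-linear (or merely additive) map satisfying τ(τ(x)) = x and τ⁅x, y⁆ = ⁅τ(x), τ(y)⁆ for all x, y ∈ L. Then the triple product (x y z) := ⁅⁅x, τ(y)⁆, z⁆ satisfies the generalized Jordan triple system identity: for all a, b, x, y, z ∈ L, (a b (x y z)) − (x y (a b z)) = ((a b x) y z) − (x (b a y) z). -/
/-- If `τ` is an additive involution of a Lie algebra preserving the bracket, then the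
triple product `(x y z) := ⁅⁅x, τ y⁆, z⁆` satisfies the generalized Jordan triple
system identity. -/
theorem gjts_of_involution {R L : Type*} [CommRing R] [LieRing L] [LieAlgebra R L]
    (τ : L → L)
    (hadd : ∀ x y : L, τ (x + y) = τ x + τ y)
    (hinv : ∀ x : L, τ (τ x) = x)
    (hbr : ∀ x y : L, τ ⁅x, y⁆ = ⁅τ x, τ y⁆) :
    ∀ a b x y z : L,
      ⁅⁅a, τ b⁆, ⁅⁅x, τ y⁆, z⁆⁆ - ⁅⁅x, τ y⁆, ⁅⁅a, τ b⁆, z⁆⁆ =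
        ⁅⁅⁅⁅a, τ b⁆, x⁆, τ y⁆, z⁆ - ⁅⁅x, τ ⁅⁅b, τ a⁆, y⁆⁆, z⁆ := by
  intro a b x y z
  have h : τ ⁅⁅b, τ a⁆, y⁆ = -⁅⁅a, τ b⁆, τ y⁆ := by
    rw [hbr, hbr, hinv, ← lie_skew (τ b) a, neg_lie]
  rw [h]
  simp only [lie_neg, neg_lie, sub_neg_eq_add, lie_lie, sub_lie, lie_sub, add_lie, lie_add]
  abel
end

section
/- Let n ∈ ℕ and let f : Fin n → Fin n → Fin n → Fin n → ℂ (written f a b c d for f^a{}_b{}^c{}_d) satisfy: (i) the generalized Jordan triple system identity: for all a, b, c, d, e, g, Σ_h f a b h g · f c d e h = Σ_h f c d h g · f a b e h + Σ_h f a b c h · f h d e g − Σ_h f a b h d · f c h e g; (ii) the symmetry f a b c d = f c d a b; (iii) the antisymmetry f a b c d = −f c b a d. Define F a b c d := 2 · f a c b d (corresponding to f^{ab}{}_{cd}). Then F satisfies the N=6 fundamental identity f^{a[b}{}_{dc} f^{e]d}{}_{gh} = f^{be}{}_{d[g} f^{ad}{}_{h]c}: for all a, b, c, e, g, h, (1/2)·(Σ_d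 F a b d c · F e d g h − Σ_d F a e d c · F b d g h) = (1/2)·(Σ_d F b e d g · F a d h c − Σ_d F b e d h · F a d g c). -/
open Finset

/-- Structure constants `f a b c d` (for `f^a{}_b{}^c{}_d`) of a generalized Jordan
triple system that are symmetric under interchange of the pairs and antisymmetric in
the first and third indices give rise, via `F a b c d := 2 * f a c b d`
(i.e. `f^{ab}{}_{cd} = 2 f^a{}_c{}^b{}_d`), to structure constants satisfying the
`𝒩 = 6` fundamental identity `f^{a[b}{}_{dc} f^{e]d}{}_{gh} = f^{be}{}_{d[g} f^{ad}{}_{h]c}`. -/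
theorem n6_fundamental_identity (n : ℕ) (f : Fin n → Fin n → Fin n → Fin n → ℂ)
    (hGJTS : ∀ a b c d e g : Fin n,
      ∑ h, f a b h g * f c d e h =
        ∑ h, f c d h g * f a b e h + ∑ h, f a b c h * f h d e g
          - ∑ h, f a b h d * f c h e g)
    (hsym : ∀ a b c d : Fin n, f a b c d = f c d a b)
    (hanti : ∀ a b c d : Fin n, f a b c d = -f c b a d)
    (F : Fin n → Fin n → Fin n → Fin n → ℂ)
    (hF : ∀ a b c d : Fin n, F a b c d = 2 * f a c b d) :
    ∀ a b c e g h : Fin n,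
      (1 / 2 : ℂ) * ((∑ d, F a b d c * F e d g h) - ∑ d, F a e d c * F b d g h) =
        (1 / 2 : ℂ) * ((∑ d, F b e d g * F a d h c) - ∑ d, F b e d h * F a d g c) := by
  intro a b c e g h
  -- antisymmetry in the second and fourth indices
  have h24 : ∀ a b c d : Fin n, f a b c d = -f a d c b := by
    intro a b c d; rw [hanti, hsym]
  -- rewrite the four sums in the goal
  have G1 : (∑ d, F a b d c * F e d g h) = 4 * ∑ x, f b c a x * f x h e g := by
    rw [Finset.mul_sum]
    refine Finset.sum_congr rfl fun x _ => ?_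
    rw [hF, hF, hsym a x b c, hsym e g x h]; ring
  have G2 : (∑ d, F a e d c * F b d g h) = 4 * ∑ x, f e c a x * f x h b g := by
    rw [Finset.mul_sum]
    refine Finset.sum_congr rfl fun x _ => ?_
    rw [hF, hF, hsym a x e c, hsym b g x h]; ring
  have G3 : (∑ d, F b e d g * F a d h c) = 4 * ∑ x, f e g b x * f x c a h := by
    rw [Finset.mul_sum]
    refine Finset.sum_congr rfl fun x _ => ?_
    rw [hF, hF, hsym b x e g, hsym a h x c]; ring
  have G4 : (∑ d, F b e d h * F a d g c) = 4 * ∑ x, f e h b x * f x c a g := by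
    rw [Finset.mul_sum]
    refine Finset.sum_congr rfl fun x _ => ?_
    rw [hF, hF, hsym b x e h, hsym a g x c]; ring
  -- instances of the GJTS identity
  have E1 := hGJTS b c a h e g
  have E2 := hGJTS e c a h b g
  have E3 := hGJTS e g b c a h
  have E4 := hGJTS e h b c a g
  have E5 := hGJTS b c a g e h
  -- sum-level consequences of the symmetries
  have M1 : (∑ x, f b c x g * f e h a x) + (∑ x, f b c x g * f a h e x) = 0 := by
    rw [← Finset.sum_add_distrib]
    refine Finset.sum_eq_zero fun x _ => ?_
    rw [hanti e h a x]; ring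
  have M2 : (∑ x, f a h x g * f b c e x) + (∑ x, f a g x h * f b c e x) = 0 := by
    rw [← Finset.sum_add_distrib]
    refine Finset.sum_eq_zero fun x _ => ?_
    rw [h24 a h x g]; ring
  have M3 : (∑ x, f a h x g * f e c b x) - (∑ x, f a g x h * f b c e x) = 0 := by
    rw [← Finset.sum_sub_distrib]
    refine Finset.sum_eq_zero fun x _ => ?_
    rw [h24 a h x g, hanti e c b x]; ring
  have M4 : (∑ x, f b c x h * f e g a x) - (∑ x, f b c x h * f a x e g) = 0 := by
    rw [← Finset.sum_sub_distrib]
    refine Finset.sum_eq_zero fun x _ => ?_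
    rw [hsym e g a x]; ring
  have M5 : (∑ x, f b c x h * f a g e x) + (∑ x, f b c x h * f a x e g) = 0 := by
    rw [← Finset.sum_add_distrib]
    refine Finset.sum_eq_zero fun x _ => ?_
    rw [h24 a g e x]; ring
  have M6 : (∑ x, f e g x h * f b c a x) + (∑ x, f b c a x * f x g e h) = 0 := by
    rw [← Finset.sum_add_distrib]
    refine Finset.sum_eq_zero fun x _ => ?_
    rw [hanti e g x h]; ring
  have M7 : (∑ x, f e h x g * f b c a x) - (∑ x, f b c a x * f x g e h) = 0 := by
    rw [← Finset.sum_sub_distrib]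
    refine Finset.sum_eq_zero fun x _ => ?_
    rw [h24 e h x g, hanti e g x h]; ring
  have M8 : (∑ x, f b c x g * f a x e h) + (∑ x, f b c x g * f a h e x) = 0 := by
    rw [← Finset.sum_add_distrib]
    refine Finset.sum_eq_zero fun x _ => ?_
    rw [h24 a x e h]; ring
  have M9 : (∑ x, f e g x c * f b x a h) + (∑ x, f e c x g * f a h b x) = 0 := by
    rw [← Finset.sum_add_distrib]
    refine Finset.sum_eq_zero fun x _ => ?_
    rw [h24 e g x c, hanti b x a h, h24 a x b h]; ring
  have M10 : (∑ x, f e h x c * f b x a g) - (∑ x, f e c x h * f a x b g) = 0 := by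
    rw [← Finset.sum_sub_distrib]
    refine Finset.sum_eq_zero fun x _ => ?_
    rw [h24 e h x c, hanti b x a g]; ring
  linear_combination (1/2 : ℂ) * G1 - (1/2 : ℂ) * G2 - (1/2 : ℂ) * G3 + (1/2 : ℂ) * G4
    - 2 * E1 + 2 * E2 + 2 * E3 - 2 * E4 - 4 * E5
    - 2 * M1 - 2 * M2 + 2 * M3 + 2 * M4 + 4 * M5 - 2 * M6 + 2 * M7 + 4 * M8 - 2 * M9 + 2 * M10
end

section
/- Let n ∈ ℕ and let f : Fin n → Fin n → Fin n → Fin n → ℝ (written f a b c d for f^{abc}{}_d) be totally antisymmetric in its first three arguments. Then the following two conditions are equivalent: (FI) for all a, b, c, e, e', d: Σ_g f a b c g · f e e' g d = 3 · Alt_{[a,b,c]}(Σ_g f e e' a g · f b c g d), where Alt_{[a,b,c]} denotes weight-one antisymmetrization over the indices a, b, c; (WFI) for all a, b, c, e, e', d: Alt_{[a,b,c,e]}(Σ_g f a b c g · f e e' g d) = 0, where Alt_{[a,b,c,e]} denotes weight-one antisymmetrization over the indices a, b, c, e. -/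
open Finset

private lemma permSum3 (n : ℕ) (f : Fin n → Fin n → Fin n → Fin n → ℝ)
    (x1 x2 x3 x4 x5 d : Fin n) :
    ∑ σ : Equiv.Perm (Fin 3), ((Equiv.Perm.sign σ : ℤ) : ℝ) *
        ∑ g, f x4 x5 (![x1, x2, x3] (σ 0)) g *
          f (![x1, x2, x3] (σ 1)) (![x1, x2, x3] (σ 2)) g d =
      (∑ g, f x4 x5 x1 g * f x2 x3 g d) - (∑ g, f x4 x5 x1 g * f x3 x2 g d) - (∑ g, f x4 x5 x2 g * f x1 x3 g d) + (∑ g, f x4 x5 x2 g * f x3 x1 g d) + (∑ g, f x4 x5 x3 g * f x1 x2 g d) - (∑ g, f x4 x5 x3 g * f x2 x1 g d) := by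
  rw [show (univ : Finset (Equiv.Perm (Fin 3))) =
      {1, Equiv.swap 0 1, Equiv.swap 0 2, Equiv.swap 1 2,
        Equiv.swap 0 1 * Equiv.swap 1 2, Equiv.swap 1 2 * Equiv.swap 0 1} from by decide]
  repeat rw [Finset.sum_insert (by decide)]
  rw [Finset.sum_singleton]
  simp [Equiv.Perm.sign_swap, Equiv.swap_apply_def, Equiv.Perm.mul_apply]
  ring

set_option maxHeartbeats 1000000 in
private lemma permSum4 (n : ℕ) (f : Fin n → Fin n → Fin n → Fin n → ℝ)
    (x1 x2 x3 x4 x5 d : Fin n) :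
    ∑ σ : Equiv.Perm (Fin 4), ((Equiv.Perm.sign σ : ℤ) : ℝ) *
        ∑ g, f (![x1, x2, x3, x4] (σ 0)) (![x1, x2, x3, x4] (σ 1)) (![x1, x2, x3, x4] (σ 2)) g *
          f (![x1, x2, x3, x4] (σ 3)) x5 g d =
      (∑ g, f x1 x2 x3 g * f x4 x5 g d) - (∑ g, f x1 x2 x4 g * f x3 x5 g d) - (∑ g, f x1 x3 x2 g * f x4 x5 g d) + (∑ g, f x1 x3 x4 g * f x2 x5 g d) + (∑ g, f x1 x4 x2 g * f x3 x5 g d) - (∑ g, f x1 x4 x3 g * f x2 x5 g d) - (∑ g, f x2 x1 x3 g * f x4 x5 g d) + (∑ g, f x2 x1 x4 g * f x3 x5 g d) + (∑ g, f x2 x3 x1 g * f x4 x5 g d) - (∑ g, f x2 x3 x4 g * f x1 x5 g d) - (∑ g, f x2 x4 x1 g * f x3 x5 g d) + (∑ g, f x2 x4 x3 g * f x1 x5 g d) + (∑ g, f x3 x1 x2 g * f x4 x5 g d) - (∑ g, f x3 x1 x4 g * f x2 x5 g d) - (∑ g, f x3 x2 x1 g * f x4 x5 g d) + (∑ g, f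 x3 x2 x4 g * f x1 x5 g d) + (∑ g, f x3 x4 x1 g * f x2 x5 g d) - (∑ g, f x3 x4 x2 g * f x1 x5 g d) - (∑ g, f x4 x1 x2 g * f x3 x5 g d) + (∑ g, f x4 x1 x3 g * f x2 x5 g d) + (∑ g, f x4 x2 x1 g * f x3 x5 g d) - (∑ g, f x4 x2 x3 g * f x1 x5 g d) - (∑ g, f x4 x3 x1 g * f x2 x5 g d) + (∑ g, f x4 x3 x2 g * f x1 x5 g d) := by
  rw [show (univ : Finset (Equiv.Perm (Fin 4))) =
      {1, Equiv.swap 3 2, Equiv.swap 2 1, Equiv.swap 2 1 * Equiv.swap 3 2, Equiv.swap 3 1 * Equiv.swap 3 2, Equiv.swap 3 1, Equiv.swap 1 0, Equiv.swap 1 0 * Equiv.swap 3 2, Equiv.swap 1 0 * Equiv.swap 2 1, Equiv.swap 1 0 * Equiv.swap 2 1 * Equiv.swap 3 2, Equiv.swap 1 0 * Equiv.swap 3 1 * Equiv.swap 3 2, Equiv.swap 1 0 * Equiv.swap 3 1, Equiv.swap 2 0 * Equiv.swap 2 1, Equiv.swap 2 0 * Equiv.swap 2 1 * Equiv.swap 3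 2, Equiv.swap 2 0, Equiv.swap 2 0 * Equiv.swap 3 2, Equiv.swap 2 0 * Equiv.swap 3 1, Equiv.swap 2 0 * Equiv.swap 3 1 * Equiv.swap 3 2, Equiv.swap 3 0 * Equiv.swap 3 1 * Equiv.swap 3 2, Equiv.swap 3 0 * Equiv.swap 3 1, Equiv.swap 3 0 * Equiv.swap 3 2, Equiv.swap 3 0, Equiv.swap 3 0 * Equiv.swap 2 1 * Equiv.swap 3 2, Equiv.swap 3 0 * Equiv.swap 2 1} from by decide]
  repeat rw [Finset.sum_insert (by decide)]
  rw [Finset.sum_singleton]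
  simp [Equiv.Perm.sign_swap, Equiv.swap_apply_def, Equiv.Perm.mul_apply]
  ring

/-- For structure constants `f a b c d` (for `f^{abc}{}_d`) totally antisymmetric in
the first three indices, the fundamental identity
`f^{abc}{}_g f^{ee'g}{}_d = 3 f^{ee'[a}{}_g f^{bc]g}{}_d` (FI) is equivalent to
`f^{[abc}{}_g f^{e]e'g}{}_d = 0` (WFI), the antisymmetrizations being of weight one. -/
theorem fundamental_identity_iff_weak (n : ℕ) (f : Fin n → Fin n → Fin n → Fin n → ℝ)
    (h12 : ∀ a b c d : Fin n, f a b c d = -f b a c d)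
    (h23 : ∀ a b c d : Fin n, f a b c d = -f a c b d) :
    (∀ a b c e e' d : Fin n,
        ∑ g, f a b c g * f e e' g d =
          3 * ((1 / 6 : ℝ) * ∑ σ : Equiv.Perm (Fin 3),
            ((Equiv.Perm.sign σ : ℤ) : ℝ) *
              ∑ g, f e e' (![a, b, c] (σ 0)) g * f (![a, b, c] (σ 1)) (![a, b, c] (σ 2)) g d))
      ↔
    (∀ a b c e e' d : Fin n,
        (1 / 24 : ℝ) * ∑ σ : Equiv.Perm (Fin 4),
            ((Equiv.Perm.sign σ : ℤ) : ℝ) *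
              ∑ g, f (![a, b, c, e] (σ 0)) (![a, b, c, e] (σ 1)) (![a, b, c, e] (σ 2)) g *
                f (![a, b, c, e] (σ 3)) e' g d = 0) := by
  constructor
  · intro h a b c e e' d
    have hr12 : ∀ x y z w u : Fin n,
        ∑ g, f x y z g * f w u g d = -∑ g, f y x z g * f w u g d := by
      intro x y z w u
      rw [← Finset.sum_neg_distrib]
      refine Finset.sum_congr rfl fun g _ => ?_
      rw [h12 x y z g]; ring
    have hr23 : ∀ x y z w u : Fin n,
        ∑ g, f x y z g * f w u g d = -∑ g, f x z y g * f w u g d := by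
      intro x y z w u
      rw [← Finset.sum_neg_distrib]
      refine Finset.sum_congr rfl fun g _ => ?_
      rw [h23 x y z g]; ring
    have hr13 : ∀ x y z w u : Fin n,
        ∑ g, f x y z g * f w u g d = -∑ g, f z y x g * f w u g d := by
      intro x y z w u
      rw [← Finset.sum_neg_distrib]
      refine Finset.sum_congr rfl fun g _ => ?_
      rw [h23 x y z g, h12 x z y g, h23 z x y g]; ring
    have hrp : ∀ x y z w u : Fin n,
        ∑ g, f x y z g * f w u g d = -∑ g, f x y z g * f u w g d := by
      intro x y z w u
      rw [← Finset.sum_neg_distrib]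
      refine Finset.sum_congr rfl fun g _ => ?_
      rw [h12 w u g d]; ring
    have H : ∀ x1 x2 x3 x4 x5 : Fin n,
        ∑ g, f x1 x2 x3 g * f x4 x5 g d =
          3 * ((1 / 6 : ℝ) * ((∑ g, f x4 x5 x1 g * f x2 x3 g d) - (∑ g, f x4 x5 x1 g * f x3 x2 g d) - (∑ g, f x4 x5 x2 g * f x1 x3 g d) + (∑ g, f x4 x5 x2 g * f x3 x1 g d) + (∑ g, f x4 x5 x3 g * f x1 x2 g d) - (∑ g, f x4 x5 x3 g * f x2 x1 g d))) := by
      intro x1 x2 x3 x4 x5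
      have h' := h x1 x2 x3 x4 x5 d
      rwa [permSum3 n f x1 x2 x3 x4 x5 d] at h'
    rw [permSum4 n f a b c e e' d]
    linear_combination (1/4 : ℝ) * H a b c e e' - (1/4 : ℝ) * H a b e c e' - (1/2 : ℝ) * H a b e' c e - (1/4 : ℝ) * H a c e b e' + (1/4 : ℝ) * H b c e a e' - (1/24 : ℝ) * hr12 a b c e e' - (1/8 : ℝ) * hr23 a b c e e' - (1/24 : ℝ) * hr13 a b c e e' + (1/24 : ℝ) * hr12 a b e c e' + (1/8 : ℝ) * hr23 a b e c e' + (1/24 : ℝ) * hr13 a b e c e' + (1/4 : ℝ) * hr23 a b e' c e + (1/4 : ℝ) * hrp a b e' c e - (1/4 : ℝ) * hr23 a b e' e c + (1/24 : ℝ) * hr12 a c b e e' + (1/24 : ℝ) * hr13 a c b e e' - (1/24 : ℝ) * hr12 a c e b e' + (1/8 : ℝ) * hr23 a c e b e' - (1/24 : ℝ) * hr13 a c e b e' + (1/4 : ℝ) * hrp a c e b e' - (1/4 : ℝ) * hr23 a c e e' b - (1/24 : ℝ) * hr12 a e b c e' - (1/24 : ℝ) * hr13 a e b c e' + (1/24 :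 ℝ) * hr12 a e c b e' - (5/24 : ℝ) * hr13 a e c b e' + (1/4 : ℝ) * hr13 a e c e' b - (1/8 : ℝ) * hr13 a e' b c e + (1/8 : ℝ) * hr13 a e' b e c - (1/8 : ℝ) * hr13 a e' c b e + (1/8 : ℝ) * hr13 a e' c e b + (1/8 : ℝ) * hr13 a e' e b c - (1/8 : ℝ) * hr13 a e' e c b + (1/24 : ℝ) * hr12 b c e a e' - (1/8 : ℝ) * hr23 b c e a e' + (1/24 : ℝ) * hr13 b c e a e' - (1/4 : ℝ) * hrp b c e a e' + (1/4 : ℝ) * hr23 b c e e' a - (1/24 : ℝ) * hr12 b e c a e' + (5/24 : ℝ) * hr13 b e c a e' - (1/4 : ℝ) * hr13 b e c e' a + (1/8 : ℝ) * hr13 b e' c a e - (1/8 : ℝ) * hr13 b e' c e a - (1/8 : ℝ) * hr13 b e' e a c + (1/8 : ℝ) * hr13 b e' e c a - (1/4 : ℝ) * hr23 c e e' a b + (1/4 : ℝ) * hr23 c e e' b a + (1/8 : ℝ) * hr13 c e' e a b - (1/8 : ℝ) * hr13 c e' e b a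
  · intro h a b c e e' d
    have hr12 : ∀ x y z w u : Fin n,
        ∑ g, f x y z g * f w u g d = -∑ g, f y x z g * f w u g d := by
      intro x y z w u
      rw [← Finset.sum_neg_distrib]
      refine Finset.sum_congr rfl fun g _ => ?_
      rw [h12 x y z g]; ring
    have hr23 : ∀ x y z w u : Fin n,
        ∑ g, f x y z g * f w u g d = -∑ g, f x z y g * f w u g d := by
      intro x y z w u
      rw [← Finset.sum_neg_distrib]
      refine Finset.sum_congr rfl fun g _ => ?_
      rw [h23 x y z g]; ring
    have hr13 : ∀ x y z w u : Fin n,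
        ∑ g, f x y z g * f w u g d = -∑ g, f z y x g * f w u g d := by
      intro x y z w u
      rw [← Finset.sum_neg_distrib]
      refine Finset.sum_congr rfl fun g _ => ?_
      rw [h23 x y z g, h12 x z y g, h23 z x y g]; ring
    have hrp : ∀ x y z w u : Fin n,
        ∑ g, f x y z g * f w u g d = -∑ g, f x y z g * f u w g d := by
      intro x y z w u
      rw [← Finset.sum_neg_distrib]
      refine Finset.sum_congr rfl fun g _ => ?_
      rw [h12 w u g d]; ring
    have H : ∀ x1 x2 x3 x4 x5 : Fin n,
        (1 / 24 : ℝ) * ((∑ g, f x1 x2 x3 g * f x4 x5 g d) - (∑ g, f x1 x2 x4 g * f x3 x5 g d) - (∑ g, f x1 x3 x2 g * f x4 x5 g d) + (∑ g, f x1 x3 x4 g * f x2 x5 g d) + (∑ g, f x1 x4 x2 g * f x3 x5 g d) - (∑ g, f x1 x4 x3 g * f x2 x5 g d) - (∑ g, f x2 x1 x3 g * f x4 x5 g d) + (∑ g, f x2 x1 x4 g * f x3 x5 g d) + (∑ g, f x2 x3 x1 g * f x4 x5 g d) - (∑ g, f x2 x3 x4 g * f x1 x5 g d) - (∑ g, f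 x2 x4 x1 g * f x3 x5 g d) + (∑ g, f x2 x4 x3 g * f x1 x5 g d) + (∑ g, f x3 x1 x2 g * f x4 x5 g d) - (∑ g, f x3 x1 x4 g * f x2 x5 g d) - (∑ g, f x3 x2 x1 g * f x4 x5 g d) + (∑ g, f x3 x2 x4 g * f x1 x5 g d) + (∑ g, f x3 x4 x1 g * f x2 x5 g d) - (∑ g, f x3 x4 x2 g * f x1 x5 g d) - (∑ g, f x4 x1 x2 g * f x3 x5 g d) + (∑ g, f x4 x1 x3 g * f x2 x5 g d) + (∑ g, f x4 x2 x1 g * f x3 x5 g d) - (∑ g, f x4 x2 x3 g * f x1 x5 g d) - (∑ g, f x4 x3 x1 g * f x2 x5 g d) + (∑ g, f x4 x3 x2 g * f x1 x5 g d)) = 0 := by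
      intro x1 x2 x3 x4 x5
      have h' := h x1 x2 x3 x4 x5 d
      rwa [permSum4 n f x1 x2 x3 x4 x5 d] at h'
    rw [permSum3 n f a b c e e' d]
    linear_combination (2 : ℝ) * H a b c e e' - (2 : ℝ) * H a b c e' e - (2 : ℝ) * H a b e e' c + (2 : ℝ) * H a c e e' b - (2 : ℝ) * H b c e e' a + (1/12 : ℝ) * hr12 a b c e e' + (1/4 : ℝ) * hr23 a b c e e' + (1/12 : ℝ) * hr13 a b c e e' + (1/2 : ℝ) * hrp a b c e e' - (1/12 : ℝ) * hr12 a b c e' e - (1/4 : ℝ) * hr23 a b c e' e - (1/12 : ℝ) * hr13 a b c e' e - (1/12 : ℝ) * hr12 a b e c e' - (1/4 : ℝ) * hr23 a b e c e' - (1/12 : ℝ) * hr13 a b e c e' + (1/2 : ℝ) * hrp a b e c e' - (1/12 : ℝ) * hr12 a b e e' c - (1/4 : ℝ) * hr23 a b e e' c - (1/12 : ℝ) * hr13 a b e e' c + (1/12 : ℝ) * hr12 a b e' c e + (1/4 : ℝ) * hr23 a b e' c e + (1/12 : ℝ) * hr13 a b e' c e - (1/2 : ℝ) * hrp a b e' c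 e + (1/12 : ℝ) * hr12 a b e' e c + (1/4 : ℝ) * hr23 a b e' e c + (1/12 : ℝ) * hr13 a b e' e c - (1/12 : ℝ) * hr12 a c b e e' - (1/12 : ℝ) * hr13 a c b e e' + (1/12 : ℝ) * hr12 a c b e' e + (1/12 : ℝ) * hr13 a c b e' e + (1/12 : ℝ) * hr12 a c e b e' + (1/4 : ℝ) * hr23 a c e b e' + (1/12 : ℝ) * hr13 a c e b e' - (1/2 : ℝ) * hrp a c e b e' + (1/12 : ℝ) * hr12 a c e e' b + (1/4 : ℝ) * hr23 a c e e' b + (1/12 : ℝ) * hr13 a c e e' b - (1/12 : ℝ) * hr12 a c e' b e - (1/4 : ℝ) * hr23 a c e' b e - (1/12 : ℝ) * hr13 a c e' b e + (1/2 : ℝ) * hrp a c e' b e - (1/12 : ℝ) * hr12 a c e' e b - (1/4 : ℝ) * hr23 a c e' e b - (1/12 : ℝ) * hr13 a c e' e b + (1/12 : ℝ) * hr12 a e b c e' + (1/12 : ℝ) * hr13 a e b c e' + (1/12 : ℝ) * hr12 a e b e' c + (1/12 : ℝ) * hr13 a e b e' c - (1/12 : ℝ) * hr12 a e c b e' - (1/12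 : ℝ) * hr13 a e c b e' - (1/12 : ℝ) * hr12 a e c e' b - (1/12 : ℝ) * hr13 a e c e' b - (1/12 : ℝ) * hr12 a e e' b c + (1/4 : ℝ) * hr23 a e e' b c - (1/12 : ℝ) * hr13 a e e' b c + (1/12 : ℝ) * hr12 a e e' c b - (1/4 : ℝ) * hr23 a e e' c b + (1/12 : ℝ) * hr13 a e e' c b - (1/12 : ℝ) * hr12 a e' b c e - (1/12 : ℝ) * hr13 a e' b c e - (1/12 : ℝ) * hr12 a e' b e c - (1/12 : ℝ) * hr13 a e' b e c + (1/12 : ℝ) * hr12 a e' c b e + (1/12 : ℝ) * hr13 a e' c b e + (1/12 : ℝ) * hr12 a e' c e b + (1/12 : ℝ) * hr13 a e' c e b + (1/12 : ℝ) * hr12 a e' e b c - (5/12 : ℝ) * hr13 a e' e b c - (1/12 : ℝ) * hr12 a e' e c b + (5/12 : ℝ) * hr13 a e' e c b - (1/12 : ℝ) * hr12 b c e a e' - (1/4 : ℝ) * hr23 b c e a e' - (1/12 : ℝ) * hr13 b c e a e' + (1/2 : ℝ) * hrp b c e a e' - (1/12 : ℝ) * hr12 b c e e' a - (1/4 : ℝ)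 * hr23 b c e e' a - (1/12 : ℝ) * hr13 b c e e' a + (1/12 : ℝ) * hr12 b c e' a e + (1/4 : ℝ) * hr23 b c e' a e + (1/12 : ℝ) * hr13 b c e' a e - (1/2 : ℝ) * hrp b c e' a e + (1/12 : ℝ) * hr12 b c e' e a + (1/4 : ℝ) * hr23 b c e' e a + (1/12 : ℝ) * hr13 b c e' e a + (1/12 : ℝ) * hr12 b e c a e' + (1/12 : ℝ) * hr13 b e c a e' + (1/12 : ℝ) * hr12 b e c e' a + (1/12 : ℝ) * hr13 b e c e' a + (1/12 : ℝ) * hr12 b e e' a c - (1/4 : ℝ) * hr23 b e e' a c + (1/12 : ℝ) * hr13 b e e' a c - (1/12 : ℝ) * hr12 b e e' c a + (1/4 : ℝ) * hr23 b e e' c a - (1/12 : ℝ) * hr13 b e e' c a - (1/12 : ℝ) * hr12 b e' c a e - (1/12 : ℝ) * hr13 b e' c a e - (1/12 : ℝ) * hr12 b e' c e a - (1/12 : ℝ) * hr13 b e' c e a - (1/12 : ℝ) * hr12 b e' e a c + (5/12 : ℝ) * hr13 b e' e a c + (1/12 : ℝ) * hr12 b e' e c a - (5/12 : ℝ) * hr13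 b e' e c a - (1/12 : ℝ) * hr12 c e e' a b + (1/4 : ℝ) * hr23 c e e' a b - (1/12 : ℝ) * hr13 c e e' a b + (1/12 : ℝ) * hr12 c e e' b a - (1/4 : ℝ) * hr23 c e e' b a + (1/12 : ℝ) * hr13 c e e' b a + (1/12 : ℝ) * hr12 c e' e a b - (5/12 : ℝ) * hr13 c e' e a b - (1/12 : ℝ) * hr12 c e' e b a + (5/12 : ℝ) * hr13 c e' e b a
end

section
/- Let n ∈ ℕ and let f : Fin n → Fin n → Fin n → Fin n → ℂ (written f a b c d for f^a{}_b{}^c{}_d) satisfy the generalized Jordan triple system identity: for all a, b, c, d, e, g, Σ_h f a b h g · f c d e h = Σ_h f c d h g · f a b e h + Σ_h f a b c h · f h d e g − Σ_h f a b h d · f c h e g. For each pair (a, b), let S a b be the n × n complex matrix whose (d, c) entry is f a b c d. Then these matrices close under the commutator with the structure constants f: for all a, b, c, d, ⁅S a b, S c d⁆ = Σ_e (f a b c e) • (S e d) − Σ_e (f a b e d) • (S c e). -/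
open Finset

/-- If the structure constants `f a b c d` (for `f^a{}_b{}^c{}_d`) satisfy the
generalized Jordan triple system identity, then the matrices `S a b` with `(d, c)`
entry `f a b c d` close under the commutator with structure constants `f`:
`⁅S^a{}_b, S^c{}_d⁆ = f^a{}_b{}^c{}_e S^e{}_d − f^a{}_b{}^e{}_d S^c{}_e`. -/
theorem matrices_close_under_commutator (n : ℕ)
    (f : Fin n → Fin n → Fin n → Fin n → ℂ)
    (hGJTS : ∀ a b c d e g : Fin n,
      ∑ h, f a b h g * f c d e h =
        ∑ h, f c d h g * f a b e h + ∑ h, f a b c h * f h d e g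
          - ∑ h, f a b h d * f c h e g)
    (S : Fin n → Fin n → Matrix (Fin n) (Fin n) ℂ)
    (hS : ∀ a b d c : Fin n, S a b d c = f a b c d) :
    ∀ a b c d : Fin n,
      ⁅S a b, S c d⁆ = (∑ e, f a b c e • S e d) - ∑ e, f a b e d • S c e := by
  intro a b c d
  ext g e
  simp only [Ring.lie_def, Matrix.sub_apply, Matrix.mul_apply, Matrix.sum_apply,
    Matrix.smul_apply, hS, smul_eq_mul]
  have h := hGJTS a b c d e g
  linear_combination h
end

section
/- Let n ∈ ℕ and let f : Fin n → Fin n → Fin n → Fin n → ℂ (written f a b c d for f^a{}_b{}^c{}_d) satisfy: (i) the generalized Jordan triple system identity: for all a, b, c, d, e, g, Σ_h f a b h g · f c d e h = Σ_h f c d h g · f a b e h + Σ_h f a b c h · f h d e g − Σ_h f a b h d · f c h e g; (ii) the symmetry f a b c d = f c d a b; (iii) the antisymmetry f a b c d = −f c b a d. Define F a b c d := 2 · f a c b d (corresponding to f^{ab}{}_{cd}) and the six-index array F3 a b c d e e' := Σ_g F a b d g · F g c e e' − (1/2)·(Σ_g F c a g d · F b g e e' − Σ_g F c b g d · F a g e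 e') (corresponding to f^{abc}{}_{def} = f^{ab}{}_{dg} f^{gc}{}_{ef} − f^{c[a}{}_{gd} f^{b]g}{}_{ef}). Then F3 is antisymmetric in its first two upper indices, F3 a b c d e e' = −F3 b a c d e e', and vanishes upon weight-one antisymmetrization over its three upper indices a, b, c. -/
open Finset

/-- For structure constants `f a b c d` (for `f^a{}_b{}^c{}_d`) of a generalized Jordan
triple system which are symmetric under interchange of the index pairs and antisymmetric
in the first and third indices, the level-three structure constants
`f^{abc}{}_{def} = f^{ab}{}_{dg} f^{gc}{}_{ef} − f^{c[a}{}_{gd} f^{b]g}{}_{ef}`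
(built from `f^{ab}{}_{cd} = 2 f^a{}_c{}^b{}_d`) are antisymmetric in the first two
upper indices and vanish upon weight-one antisymmetrization over the three upper
indices. -/
theorem level_three_structure_constants (n : ℕ)
    (f : Fin n → Fin n → Fin n → Fin n → ℂ)
    (hGJTS : ∀ a b c d e g : Fin n,
      ∑ h, f a b h g * f c d e h =
        ∑ h, f c d h g * f a b e h + ∑ h, f a b c h * f h d e g
          - ∑ h, f a b h d * f c h e g)
    (hsym : ∀ a b c d : Fin n, f a b c d = f c d a b)
    (hanti : ∀ a b c d : Fin n, f a b c d = -f c b a d)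
    (F : Fin n → Fin n → Fin n → Fin n → ℂ)
    (hF : ∀ a b c d : Fin n, F a b c d = 2 * f a c b d)
    (F3 : Fin n → Fin n → Fin n → Fin n → Fin n → Fin n → ℂ)
    (hF3 : ∀ a b c d e e' : Fin n,
      F3 a b c d e e' =
        (∑ g, F a b d g * F g c e e') -
          (1 / 2 : ℂ) * ((∑ g, F c a g d * F b g e e') - ∑ g, F c b g d * F a g e e')) :
    (∀ a b c d e e' : Fin n, F3 a b c d e e' = -F3 b a c d e e') ∧
      (∀ a b c d e e' : Fin n,
        (1 / 6 : ℂ) * ∑ σ : Equiv.Perm (Fin 3),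
          ((Equiv.Perm.sign σ : ℤ) : ℂ) *
            F3 (![a, b, c] (σ 0)) (![a, b, c] (σ 1)) (![a, b, c] (σ 2)) d e e' = 0) := by
  -- F is antisymmetric in its first two indices
  have hA : ∀ a b c d : Fin n, F a b c d = -F b a c d := by
    intro a b c d; rw [hF, hF, hanti]; ring
  -- F is antisymmetric in its last two indices
  have hL : ∀ a b c d : Fin n, F a b c d = -F a b d c := by
    intro a b c d; rw [hF, hF, hsym a c b d, hanti b d a c]; ring
  have h1 : ∀ a b c d e e' : Fin n, F3 a b c d e e' = -F3 b a c d e e' := by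
    intro a b c d e e'
    rw [hF3, hF3]
    have h2 : (∑ g, F a b d g * F g c e e') = -∑ g, F b a d g * F g c e e' := by
      rw [← Finset.sum_neg_distrib]
      exact Finset.sum_congr rfl fun g _ => by rw [hA a b d g]; ring
    rw [h2]; ring
  refine ⟨h1, ?_⟩
  intro a b c d e e'
  have hcyc : F3 a b c d e e' + F3 b c a d e e' + F3 c a b d e e' = 0 := by
    rw [hF3, hF3, hF3]
    have key : ∀ x y z : Fin n,
        (∑ g, F x y d g * F g z e e') -
          (1 / 2 : ℂ) * ((∑ g, F z x g d * F y g e e') - ∑ g, F z y g d * F x g e e') =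
        ∑ g, (F x y d g * F g z e e' -
          (1 / 2 : ℂ) * (F z x g d * F y g e e' - F z y g d * F x g e e')) := by
      intro x y z
      rw [← Finset.sum_sub_distrib, Finset.mul_sum, ← Finset.sum_sub_distrib]
    rw [key, key, key, ← Finset.sum_add_distrib, ← Finset.sum_add_distrib]
    apply Finset.sum_eq_zero
    intro g _
    rw [hL c a g d, hL c b g d, hL a b g d, hL a c g d, hL b c g d, hL b a g d,
        hA b g e e', hA a g e e', hA c g e e',
        hA a c d g, hA c b d g, hA b a d g]
    ring
  have huniv : (Finset.univ : Finset (Equiv.Perm (Fin 3))) =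
      {1, Equiv.swap 0 1, Equiv.swap 0 2, Equiv.swap 1 2,
       Equiv.swap 0 1 * Equiv.swap 1 2, Equiv.swap 1 2 * Equiv.swap 0 1} := by decide
  rw [huniv]
  rw [Finset.sum_insert (by decide), Finset.sum_insert (by decide),
      Finset.sum_insert (by decide), Finset.sum_insert (by decide),
      Finset.sum_insert (by decide), Finset.sum_singleton]
  have s1 : Equiv.Perm.sign (1 : Equiv.Perm (Fin 3)) = 1 := by decide
  have s2 : Equiv.Perm.sign (Equiv.swap (0:Fin 3) 1) = -1 := by decide
  have s3 : Equiv.Perm.sign (Equiv.swap (0:Fin 3) 2) = -1 := by decide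
  have s4 : Equiv.Perm.sign (Equiv.swap (1:Fin 3) 2) = -1 := by decide
  have s5 : Equiv.Perm.sign (Equiv.swap (0:Fin 3) 1 * Equiv.swap 1 2) = 1 := by decide
  have s6 : Equiv.Perm.sign (Equiv.swap (1:Fin 3) 2 * Equiv.swap 0 1) = 1 := by decide
  rw [s1, s2, s3, s4, s5, s6]
  norm_num
  simp only [show ((Equiv.swap (0:Fin 3) 1)) 2 = 2 from by decide,
    show ((Equiv.swap (0:Fin 3) 2)) 1 = 1 from by decide,
    show ((Equiv.swap (1:Fin 3) 2)) 0 = 0 from by decide,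
    show ((Equiv.swap (0:Fin 3) 1)) 0 = 1 from by decide,
    show ((Equiv.swap (1:Fin 3) 2)) 2 = 1 from by decide,
    Matrix.cons_val_zero, Matrix.cons_val_one, Matrix.head_cons,
    Matrix.cons_val_two, Matrix.tail_cons]
  rw [h1 b a c d e e', h1 c b a d e e', h1 a c b d e e']
  linear_combination 2 * hcyc
end
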